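/- Under the assumptions of Theorem 2 (non-increasing costs $c_1 \ge \dots \ge c_{n+1}$, fixed sequence), if $A^*$ is any feasible appointment vector and $i' \ge 2$ is an index with $A^*_{i'}$ strictly greater than its waiting-time lower bound $\left(\max_{l < i'}(A^*_l + U_l) - \sum_j \pi_{i'j}W_j\right)^+$, then replacing $A^*_{i'}$ by this lower bound yields another feasible solution whose worst-case total cost is no larger. Iterating, the componentwise-minimal feasible appointment vector (the ASAP schedule) is optimal. -/

import Mathlib

/-- Completion times from appointment times `A` and service durations `sv`. -/
noncomputable def ctimes14 (A sv : ℕ → ℝ) : ℕ → ℝ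
  | 0 => 0
  | i + 1 => max (A (i + 1)) (ctimes14 A sv i) + sv (i + 1)

/-- No-show scenarios with exactly `k` show-ups among customers `1,…,n`. -/
def isLam14 (n k : ℕ) (lam : ℕ → ℝ) : Prop :=
  (∀ j, lam j = 0 ∨ lam j = 1) ∧ ∑ j ∈ Finset.Icc 1 n, lam j = (k : ℝ)

/-- `U l i`: the worst-case total realized service time of appointments
`l (inclusive) … i (exclusive)`, over no-show scenarios with `k - 1` show-ups. -/
noncomputable def U14 (n k : ℕ) (asg : ℕ → ℕ) (hi : ℕ → ℝ) (l i : ℕ) : ℝ :=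
  sSup {x | ∃ lam : ℕ → ℝ, isLam14 n (k - 1) lam ∧
    x = ∑ σ ∈ Finset.Ico l i, lam (asg σ) * hi (asg σ)}

/-- Feasibility: `A 1 = 0` and each appointment time dominates its waiting-time
lower bound `(max_{l<i}(A l + U l i) - W_{asg i})⁺`. -/
def feas14 (n k : ℕ) (asg : ℕ → ℕ) (hi W : ℕ → ℝ) (A : ℕ → ℝ) : Prop :=
  A 1 = 0 ∧
    ∀ i, ∀ _h2 : 2 ≤ i, i ≤ n →
      max (((Finset.Icc 1 (i - 1)).sup' (Finset.nonempty_Icc.mpr (by omega))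
        (fun l => A l + U14 n k asg hi l i)) - W (asg i)) 0 ≤ A i

/-- Total cost of schedule `A` under service times `p` and no-show scenario `lam`. -/
noncomputable def cost14 (n : ℕ) (asg : ℕ → ℕ) (c : ℕ → ℝ) (co L : ℝ)
    (A p lam : ℕ → ℝ) : ℝ :=
  (∑ i ∈ Finset.Icc 1 n,
      c i * max (A i - ctimes14 A (fun σ => lam (asg σ) * p (asg σ)) (i - 1)) 0) +
    max (c (n + 1) * (L - ctimes14 A (fun σ => lam (asg σ) * p (asg σ)) n))
      (co * (ctimes14 A (fun σ => lam (asg σ) * p (asg σ)) n - L))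

/-- Worst-case total cost over service-time box and no-show scenarios with `k`
show-ups. -/
noncomputable def wcost14 (n k : ℕ) (asg : ℕ → ℕ) (c : ℕ → ℝ) (co L : ℝ)
    (lo hi A : ℕ → ℝ) : ℝ :=
  sSup {x | ∃ p lam : ℕ → ℝ, (∀ j, p j ∈ Set.Icc (lo j) (hi j)) ∧
    isLam14 n k lam ∧ x = cost14 n asg c co L A p lam}


/-!
Lowering an appointment time to its waiting-time lower bound keeps feasibility, since that
bound only involves earlier appointments and is monotone in them. It cannot increase the cost,
because the cost is monotone in the appointment vector: writing the idle time before customer `i`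
as `C i - C (i - 1) - s i`, with `C` the completion times, an Abel summation turns the extra
weighted idle time caused by later appointments into `∑ (c i - c (i + 1)) ΔC i ≥ 0`, where
`ΔC ≥ 0`. The ASAP schedule lies below every feasible schedule, by induction over the customers,
hence is optimal.
-/

open Finset

section CompletionTimes

variable (A B sv : ℕ → ℝ)

lemma ctimes14_succ (m : ℕ) :
    ctimes14 A sv (m + 1) = max (A (m + 1)) (ctimes14 A sv m) + sv (m + 1) := rfl

variable {A B}

lemma ctimes14_mono {m : ℕ} (hAB : ∀ σ ∈ Icc 1 m, A σ ≤ B σ) :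
    ctimes14 A sv m ≤ ctimes14 B sv m := by
  induction m with
  | zero => exact le_rfl
  | succ m ih =>
    have hA : A (m + 1) ≤ B (m + 1) := hAB (m + 1) (by simp)
    have hC := ih fun σ hσ => hAB σ (Icc_subset_Icc_right m.le_succ hσ)
    rw [ctimes14_succ, ctimes14_succ]
    gcongr

variable (A)

lemma max_sub_ctimes14_eq (m : ℕ) :
    max (A (m + 1) - ctimes14 A sv m) 0 =
      ctimes14 A sv (m + 1) - ctimes14 A sv m - sv (m + 1) := by
  have h := max_sub_sub_right (A (m + 1)) (ctimes14 A sv m) (ctimes14 A sv m)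
  rw [sub_self] at h
  rw [h, ctimes14_succ]
  ring

lemma continuous_ctimes14 {X : Type*} [TopologicalSpace X] {s : X → ℕ → ℝ}
    (hs : ∀ σ, Continuous fun x => s x σ) (m : ℕ) :
    Continuous fun x => ctimes14 A (s x) m := by
  induction m with
  | zero => exact continuous_const
  | succ m ih => exact (continuous_const.max ih).add (hs (m + 1))

end CompletionTimes

section Cost

variable (n : ℕ) (asg : ℕ → ℕ) {c : ℕ → ℝ} (co L : ℝ) {A B : ℕ → ℝ} (sv : ℕ → ℝ)

lemma weighted_idle_sub_ge (hcdec : Antitone c) (hAB : ∀ σ ∈ Icc 1 n, A σ ≤ B σ) {m : ℕ}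
    (hm : m ≤ n) :
    c (m + 1) * (ctimes14 B sv m - ctimes14 A sv m) ≤
      ∑ i ∈ Icc 1 m, (c i * max (B i - ctimes14 B sv (i - 1)) 0
        - c i * max (A i - ctimes14 A sv (i - 1)) 0) := by
  induction m with
  | zero => simp [ctimes14]
  | succ m ih =>
    have hsub : ∀ σ ∈ Icc 1 (m + 1), A σ ≤ B σ :=
      fun σ hσ => hAB σ (Icc_subset_Icc_right hm hσ)
    have hC : 0 ≤ ctimes14 B sv (m + 1) - ctimes14 A sv (m + 1) :=
      sub_nonneg.mpr (ctimes14_mono sv hsub)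
    have hc' := mul_le_mul_of_nonneg_right (hcdec m.succ.le_succ) hC
    rw [sum_Icc_succ_top (by omega), Nat.add_sub_cancel, max_sub_ctimes14_eq,
      max_sub_ctimes14_eq]
    linarith [ih (by omega)]

lemma cost14_mono (hc : 0 ≤ c (n + 1)) (hcdec : Antitone c) (hco : 0 ≤ co)
    (hAB : ∀ σ ∈ Icc 1 n, A σ ≤ B σ) (p lam : ℕ → ℝ) :
    cost14 n asg c co L A p lam ≤ cost14 n asg c co L B p lam := by
  set s : ℕ → ℝ := fun σ => lam (asg σ) * p (asg σ)
  have hidle := weighted_idle_sub_ge n s hcdec hAB le_rfl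
  rw [sum_sub_distrib] at hidle
  have hC : 0 ≤ ctimes14 B s n - ctimes14 A s n := sub_nonneg.mpr (ctimes14_mono s hAB)
  have hterminal : max (c (n + 1) * (L - ctimes14 A s n)) (co * (ctimes14 A s n - L)) ≤
      max (c (n + 1) * (L - ctimes14 B s n)) (co * (ctimes14 B s n - L))
        + c (n + 1) * (ctimes14 B s n - ctimes14 A s n) := by
    have hover : co * (ctimes14 A s n - L) ≤ co * (ctimes14 B s n - L) := by
      gcongr; linarith
    have := mul_nonneg hc hC
    apply max_le
    · linarith [le_max_left (c (n + 1) * (L - ctimes14 B s n)) (co * (ctimes14 B s n - L))]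
    · linarith [le_max_right (c (n + 1) * (L - ctimes14 B s n)) (co * (ctimes14 B s n - L))]
  simp only [cost14]
  linarith

end Cost

section WorstCase

variable (n k : ℕ) (asg : ℕ → ℕ) (c : ℕ → ℝ) (co L : ℝ) (lo hi : ℕ → ℝ)

def scenarios14 : Set ((ℕ → ℝ) × (ℕ → ℝ)) :=
  {q | (∀ j, q.1 j ∈ Set.Icc (lo j) (hi j)) ∧ isLam14 n k q.2}

lemma wcost14_eq_iSup (A : ℕ → ℝ) :
    wcost14 n k asg c co L lo hi A =
      ⨆ q : scenarios14 n k lo hi, cost14 n asg c co L A q.1.1 q.1.2 := by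
  rw [wcost14, iSup]
  congr 1
  ext x
  constructor
  · rintro ⟨p, lam, hp, hlam, rfl⟩
    exact ⟨⟨(p, lam), hp, hlam⟩, rfl⟩
  · rintro ⟨⟨⟨p, lam⟩, hp, hlam⟩, rfl⟩
    exact ⟨p, lam, hp, hlam, rfl⟩

lemma bddAbove_range_cost14 (A : ℕ → ℝ) :
    BddAbove (Set.range fun q : scenarios14 n k lo hi => cost14 n asg c co L A q.1.1 q.1.2) := by
  set K := (Set.univ.pi fun j => Set.Icc (lo j) (hi j)) ×ˢ
    (Set.univ.pi fun _ : ℕ => ({0, 1} : Set ℝ))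
  have hK : IsCompact K := (isCompact_univ_pi fun j => isCompact_Icc).prod
    (isCompact_univ_pi fun _ => (Set.toFinite _).isCompact)
  have hsub : scenarios14 n k lo hi ⊆ K := fun q hq => ⟨fun j _ => hq.1 j, fun j _ => hq.2.1 j⟩
  have hC : ∀ m, Continuous fun q : (ℕ → ℝ) × (ℕ → ℝ) =>
      ctimes14 A (fun σ => q.2 (asg σ) * q.1 (asg σ)) m :=
    continuous_ctimes14 A fun σ => by fun_prop
  have hcost : Continuous fun q : (ℕ → ℝ) × (ℕ → ℝ) => cost14 n asg c co L A q.1 q.2 := by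
    unfold cost14
    fun_prop
  exact (hK.bddAbove_image hcost.continuousOn).mono
    (by rintro _ ⟨q, rfl⟩; exact ⟨q.1, hsub q.2, rfl⟩)

variable {c}

lemma wcost14_mono (hc : 0 ≤ c (n + 1)) (hcdec : Antitone c) (hco : 0 ≤ co) {A B : ℕ → ℝ}
    (hAB : ∀ σ ∈ Icc 1 n, A σ ≤ B σ) :
    wcost14 n k asg c co L lo hi A ≤ wcost14 n k asg c co L lo hi B := by
  rw [wcost14_eq_iSup, wcost14_eq_iSup]
  exact ciSup_mono (bddAbove_range_cost14 n k asg c co L lo hi B)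
    fun q => cost14_mono n asg co L hc hcdec hco hAB q.1.1 q.1.2

end WorstCase

section Feasibility

variable (n k : ℕ) (asg : ℕ → ℕ) (hi W : ℕ → ℝ)

-- `feas14 … A` unfolds to `A 1 = 0 ∧ ∀ i h, i ≤ n → lowerBound14 … A i h ≤ A i`.
noncomputable def lowerBound14 (A : ℕ → ℝ) (i : ℕ) (h : 2 ≤ i) : ℝ :=
  max (((Finset.Icc 1 (i - 1)).sup' (Finset.nonempty_Icc.mpr (by omega))
    (fun l => A l + U14 n k asg hi l i)) - W (asg i)) 0

variable {n k asg hi W} {A B : ℕ → ℝ}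

lemma lowerBound14_mono {i : ℕ} (h : 2 ≤ i) (hAB : ∀ l ∈ Icc 1 (i - 1), A l ≤ B l) :
    lowerBound14 n k asg hi W A i h ≤ lowerBound14 n k asg hi W B i h := by
  unfold lowerBound14
  gcongr with l hl
  exact hAB l hl

lemma lowerBound14_update_self {i : ℕ} (h : 2 ≤ i) (v : ℝ) :
    lowerBound14 n k asg hi W (Function.update A i v) i h = lowerBound14 n k asg hi W A i h := by
  have hagree : ∀ l ∈ Icc 1 (i - 1), Function.update A i v l = A l := fun l hl =>
    Function.update_of_ne (by simp only [mem_Icc] at hl; omega) v A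
  exact le_antisymm (lowerBound14_mono h fun l hl => (hagree l hl).le)
    (lowerBound14_mono h fun l hl => (hagree l hl).ge)

lemma feas14_update {i' : ℕ} (hA : feas14 n k asg hi W A) (h2 : 2 ≤ i') {v : ℝ}
    (hvA : v ≤ A i') (hv : lowerBound14 n k asg hi W A i' h2 ≤ v) :
    feas14 n k asg hi W (Function.update A i' v) := by
  have hle : Function.update A i' v ≤ A := update_le_self_iff.mpr hvA
  refine ⟨by rw [Function.update_of_ne (by omega)]; exact hA.1, fun i hi2 hin => ?_⟩
  change lowerBound14 n k asg hi W _ i hi2 ≤ _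
  by_cases hii : i = i'
  · subst hii
    rwa [lowerBound14_update_self, Function.update_self]
  · rw [Function.update_of_ne hii]
    exact (lowerBound14_mono hi2 fun l _ => hle l).trans (hA.2 i hi2 hin)

lemma le_of_eq_lowerBound14 (hA1 : A 1 = 0)
    (hA : ∀ i (h : 2 ≤ i), i ≤ n → A i = lowerBound14 n k asg hi W A i h)
    (hB : feas14 n k asg hi W B) : ∀ i ∈ Icc 1 n, A i ≤ B i := by
  intro i
  induction i using Nat.strong_induction_on with
  | _ i ih =>
    intro hi
    rw [mem_Icc] at hi
    obtain rfl | hi2 := eq_or_lt_of_le hi.1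
    · rw [hA1, hB.1]
    · rw [hA i hi2 hi.2]
      refine (lowerBound14_mono hi2 fun l hl => ?_).trans (hB.2 i hi2 hi.2)
      simp only [mem_Icc] at hl
      exact ih l (by omega) (mem_Icc.mpr ⟨hl.1, by omega⟩)

end Feasibility

/-- with non-increasing idle costs, lowering any appointment time
that strictly exceeds its waiting-time lower bound down to that bound preserves
feasibility and does not increase the worst-case total cost; iterating, the
componentwise-minimal feasible appointment vector (the ASAP schedule) is optimal. -/
theorem lowering_to_bound_preserves_feasibility_and_cost
    (n k : ℕ)
    (asg : ℕ → ℕ) (lo hi W : ℕ → ℝ) (c : ℕ → ℝ) (co L : ℝ)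
    (hc : ∀ i, 0 ≤ c i) (hcdec : ∀ i j, i ≤ j → c j ≤ c i) (hco : 0 ≤ co) :
    (∀ (Astar : ℕ → ℝ), feas14 n k asg hi W Astar →
      ∀ i', ∀ h2 : 2 ≤ i', i' ≤ n →
        max (((Finset.Icc 1 (i' - 1)).sup' (Finset.nonempty_Icc.mpr (by omega))
          (fun l => Astar l + U14 n k asg hi l i')) - W (asg i')) 0 < Astar i' →
        feas14 n k asg hi W (Function.update Astar i'
          (max (((Finset.Icc 1 (i' - 1)).sup' (Finset.nonempty_Icc.mpr (by omega))
            (fun l => Astar l + U14 n k asg hi l i')) - W (asg i')) 0)) ∧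
        wcost14 n k asg c co L lo hi (Function.update Astar i'
          (max (((Finset.Icc 1 (i' - 1)).sup' (Finset.nonempty_Icc.mpr (by omega))
            (fun l => Astar l + U14 n k asg hi l i')) - W (asg i')) 0)) ≤
          wcost14 n k asg c co L lo hi Astar) ∧
    ∀ AA : ℕ → ℝ, AA 1 = 0 →
      (∀ i, ∀ _h2 : 2 ≤ i, i ≤ n →
        AA i = max (((Finset.Icc 1 (i - 1)).sup' (Finset.nonempty_Icc.mpr (by omega))
          (fun l => AA l + U14 n k asg hi l i)) - W (asg i)) 0) →
      feas14 n k asg hi W AA ∧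
        ∀ B : ℕ → ℝ, feas14 n k asg hi W B →
          wcost14 n k asg c co L lo hi AA ≤ wcost14 n k asg c co L lo hi B := by
  refine ⟨fun Astar hfeas i' h2 hin _ => ?_, fun AA h1 heq => ?_⟩
  · have hle : lowerBound14 n k asg hi W Astar i' h2 ≤ Astar i' := hfeas.2 i' h2 hin
    exact ⟨feas14_update hfeas h2 hle le_rfl,
      wcost14_mono n k asg co L lo hi (hc (n + 1)) hcdec hco
        fun σ _ => update_le_self_iff.mpr hle σ⟩
  · have hfeas : feas14 n k asg hi W AA := ⟨h1, fun i h2 hin => (heq i h2 hin).ge⟩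
    exact ⟨hfeas, fun B hB =>
      wcost14_mono n k asg co L lo hi (hc (n + 1)) hcdec hco (le_of_eq_lowerBound14 h1 heq hB)⟩
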